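/- arXiv:1802.09037 — 7 statements merged into one kernel-verified Lean document; each statement's English description precedes it below -/
import Mathlib

section
/- Let (E, E₊, θ) be a reflection positive Hilbert space, E₋ := θ(E₊), E₀ := {v ∈ E₊ : θv = v}, and let E₀' ⊆ E₀ be a closed subspace with orthogonal projections P₀ onto E₀' and P± onto E±. If the Markov condition P₊P₀P₋ = P₊P₋ holds, then E₀' = E₀ and for every u ∈ E₊ one has ⟨u, θu⟩ = ‖P₀u‖². -/
open scoped ComplexOrder

/-- For a reflection positive Hilbert space `(E, E₊, θ)` with `E₋ = θ(E₊)`,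
`E₀ = {v ∈ E₊ : θ v = v}` and a closed subspace `E₀' ⊆ E₀` with orthogonal projections
`P₀, P₊, P₋` onto `E₀', E₊, E₋`: if the Markov condition `P₊P₀P₋ = P₊P₋` holds, then
`E₀' = E₀` and `⟨u, θu⟩ = ‖P₀u‖²` for all `u ∈ E₊`. -/
theorem stmt1 {E : Type*} [NormedAddCommGroup E] [InnerProductSpace ℂ E] [CompleteSpace E]
    (θ : E ≃ₗᵢ[ℂ] E) (hθ : ∀ x, θ (θ x) = x)
    (Ep : Submodule ℂ E) (hEpcl : IsClosed (Ep : Set E))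
    (hpos : ∀ ξ ∈ Ep, 0 ≤ (inner ℂ ξ (θ ξ) : ℂ))
    (E0' : Submodule ℂ E) (hE0'cl : IsClosed (E0' : Set E))
    (hE0'le : ∀ v ∈ E0', v ∈ Ep ∧ θ v = v)
    (P0 Pp Pm : E →L[ℂ] E)
    (hP0mem : ∀ x, P0 x ∈ E0')
    (hP0orth : ∀ x, ∀ v ∈ E0', (inner ℂ (x - P0 x) v : ℂ) = 0)
    (hPpmem : ∀ x, Pp x ∈ Ep)
    (hPporth : ∀ x, ∀ v ∈ Ep, (inner ℂ (x - Pp x) v : ℂ) = 0)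
    (hPmmem : ∀ x, θ (Pm x) ∈ Ep)
    (hPmorth : ∀ x, ∀ v : E, θ v ∈ Ep → (inner ℂ (x - Pm x) v : ℂ) = 0)
    (hMarkov : Pp.comp (P0.comp Pm) = Pp.comp Pm) :
    (∀ v : E, v ∈ E0' ↔ (v ∈ Ep ∧ θ v = v)) ∧
    ∀ u ∈ Ep, (inner ℂ u (θ u) : ℂ) = ((‖P0 u‖ ^ 2 : ℝ) : ℂ) := by
  have hfix : ∀ v ∈ E0', θ v = v := fun v hv => (hE0'le v hv).2
  have hmemEp : ∀ v ∈ E0', v ∈ Ep := fun v hv => (hE0'le v hv).1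
  -- P0 commutes with θ (as both fix E0' and θ is unitary)
  have hP0θ : ∀ x, P0 (θ x) = P0 x := by
    intro x
    have hw : P0 (θ x) - P0 x ∈ E0' := E0'.sub_mem (hP0mem _) (hP0mem _)
    have h1 : (inner ℂ (θ x - P0 (θ x)) (P0 (θ x) - P0 x) : ℂ) = 0 := hP0orth _ _ hw
    have h2 : (inner ℂ (x - P0 x) (P0 (θ x) - P0 x) : ℂ) = 0 := hP0orth _ _ hw
    have h3 : (inner ℂ (θ x) (P0 (θ x) - P0 x) : ℂ) = inner ℂ x (P0 (θ x) - P0 x) := by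
      conv_lhs => rw [← hfix _ hw]
      exact θ.inner_map_map x _
    have h4 : (inner ℂ (P0 (θ x) - P0 x) (P0 (θ x) - P0 x) : ℂ) = 0 := by
      rw [inner_sub_left] at h1 h2 ⊢
      rw [h3] at h1
      linear_combination h2 - h1
    have := inner_self_eq_zero.mp h4
    have := sub_eq_zero.mp this
    exact this
  -- Pp fixes Ep
  have hpfix : ∀ v ∈ Ep, Pp v = v := by
    intro v hv
    have h1 : (inner ℂ (v - Pp v) (v - Pp v) : ℂ) = 0 :=
      hPporth v _ (Ep.sub_mem hv (hPpmem v))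
    exact (sub_eq_zero.mp (inner_self_eq_zero.mp h1)).symm
  -- Pm fixes θ(Ep)
  have hmfix : ∀ v : E, θ v ∈ Ep → Pm v = v := by
    intro v hv
    have hmem : θ (v - Pm v) ∈ Ep := by
      rw [map_sub]
      exact Ep.sub_mem hv (hPmmem v)
    have h1 : (inner ℂ (v - Pm v) (v - Pm v) : ℂ) = 0 := hPmorth v _ hmem
    exact (sub_eq_zero.mp (inner_self_eq_zero.mp h1)).symm
  -- key identity
  have key : ∀ u ∈ Ep, (inner ℂ u (θ u) : ℂ) = ((‖P0 u‖ ^ 2 : ℝ) : ℂ) := by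
    intro u hu
    have hm : Pm (θ u) = θ u := hmfix _ (by rw [hθ]; exact hu)
    have hmk : Pp (P0 (Pm (θ u))) = Pp (Pm (θ u)) := by
      have := ContinuousLinearMap.ext_iff.mp hMarkov (θ u)
      simpa using this
    rw [hm, hP0θ] at hmk
    have hfixP0u : Pp (P0 u) = P0 u := hpfix _ (hmemEp _ (hP0mem u))
    have hPpθu : Pp (θ u) = P0 u := by rw [← hmk, hfixP0u]
    have h5 : (inner ℂ (θ u - Pp (θ u)) u : ℂ) = 0 := hPporth _ _ hu
    have h6 : (inner ℂ u (θ u - Pp (θ u)) : ℂ) = 0 := by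
      rw [← inner_conj_symm, h5, map_zero]
    have h7 : (inner ℂ (u - P0 u) (P0 u) : ℂ) = 0 := hP0orth u _ (hP0mem u)
    have h8 : (inner ℂ u (θ u) : ℂ) = inner ℂ (P0 u) (P0 u) := by
      rw [inner_sub_right, hPpθu, sub_eq_zero] at h6
      rw [inner_sub_left, sub_eq_zero] at h7
      rw [h6, h7]
    rw [h8, inner_self_eq_norm_sq_to_K]
    norm_cast
  refine ⟨fun v => ⟨hE0'le v, ?_⟩, key⟩
  rintro ⟨hv, hθv⟩
  have hk := key v hv
  rw [hθv, inner_self_eq_norm_sq_to_K] at hk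
  have hnorm : ‖v‖ ^ 2 = ‖P0 v‖ ^ 2 := by
    have h : ((‖v‖ ^ 2 : ℝ) : ℂ) = ((‖P0 v‖ ^ 2 : ℝ) : ℂ) := by
      push_cast at hk ⊢; exact hk
    exact_mod_cast h
  have h7 : (inner ℂ (v - P0 v) (P0 v) : ℂ) = 0 := hP0orth v _ (hP0mem v)
  have h7' : (inner ℂ (P0 v) (v - P0 v) : ℂ) = 0 := by
    rw [← inner_conj_symm, h7, map_zero]
  have h9 : (inner ℂ (v - P0 v) (v - P0 v) : ℂ) = 0 := by
    have e1 : (inner ℂ v v : ℂ) = (‖v‖ : ℂ) ^ 2 := inner_self_eq_norm_sq_to_K v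
    have e2 : (inner ℂ (P0 v) (P0 v) : ℂ) = (‖P0 v‖ : ℂ) ^ 2 := inner_self_eq_norm_sq_to_K (P0 v)
    have e3 : ((‖v‖ : ℂ)) ^ 2 = ((‖P0 v‖ : ℂ)) ^ 2 := by exact_mod_cast hnorm
    rw [inner_sub_left, inner_sub_right, inner_sub_right]
    rw [inner_sub_left] at h7
    rw [inner_sub_right] at h7'
    linear_combination e1 + e3 - h7 - h7' - e2
  have := sub_eq_zero.mp (inner_self_eq_zero.mp h9)
  rw [this]
  exact hP0mem v
end

section
/- Let (E, E₊, θ) be a reflection positive Hilbert space, N := {ξ ∈ E₊ : ⟨ξ, θξ⟩ = 0}, and let Ê be the Hilbert completion of E₊/N with respect to ⟨ξ, η⟩_θ := ⟨ξ, θη⟩, with quotient map q : E₊ → Ê. If S : E₊ → E₊ is a bounded linear operator satisfying ⟨Sξ, η⟩_θ = ⟨ξ, Sη⟩_θ for all ξ, η ∈ E₊, then S(N) ⊆ N, the induced operator Ŝ on Ê defined by Ŝ(q ξ) = q(Sξ) is well-defined, bounded and symmetric, and ‖Ŝ‖ ≤ ‖S‖. -/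
open scoped ComplexOrder

/-- OS transform of a bounded θ-symmetric operator on `E₊`: it maps the null space `N`
of the form `⟨·,θ·⟩` into itself and induces a bounded symmetric operator `Ŝ` on the
Hilbert space `Ê` (the completion of `E₊/N`, realized by a linear map `q : E₊ → Ê` with
dense range satisfying `⟨qξ, qη⟩ = ⟨ξ, θη⟩`), with `‖Ŝ‖ ≤ ‖S‖`. -/
theorem stmt2 {E F : Type*} [NormedAddCommGroup E] [InnerProductSpace ℂ E] [CompleteSpace E]
    [NormedAddCommGroup F] [InnerProductSpace ℂ F] [CompleteSpace F]
    (θ : E ≃ₗᵢ[ℂ] E) (hθ : ∀ x, θ (θ x) = x)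
    (Ep : Submodule ℂ E) (hcl : IsClosed (Ep : Set E))
    (hpos : ∀ ξ ∈ Ep, 0 ≤ (inner ℂ ξ (θ ξ) : ℂ))
    (q : Ep →ₗ[ℂ] F)
    (hq : ∀ ξ η : Ep, (inner ℂ (q ξ) (q η) : ℂ) = inner ℂ (ξ : E) (θ (η : E)))
    (hqdense : DenseRange (⇑q))
    (S : Ep →L[ℂ] Ep)
    (hsym : ∀ ξ η : Ep, (inner ℂ ((S ξ : E)) (θ (η : E)) : ℂ) = inner ℂ (ξ : E) (θ ((S η : E)))) :
    (∀ ξ : Ep, (inner ℂ (ξ : E) (θ (ξ : E)) : ℂ) = 0 →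
        (inner ℂ ((S ξ : E)) (θ ((S ξ : E))) : ℂ) = 0) ∧
    ∃ Shat : F →L[ℂ] F, (∀ ξ : Ep, Shat (q ξ) = q (S ξ)) ∧
      (∀ x y : F, (inner ℂ (Shat x) y : ℂ) = inner ℂ x (Shat y)) ∧
      ‖Shat‖ ≤ ‖S‖ := by
  -- `q` is norm-nonincreasing
  have hqnorm : ∀ ξ : Ep, ‖q ξ‖ ≤ ‖ξ‖ := by
    intro ξ
    have h1 : ‖q ξ‖ ^ 2 = RCLike.re (inner ℂ ((ξ : E)) (θ (ξ : E)) : ℂ) := by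
      rw [← hq, inner_self_eq_norm_sq]
    have h2 : RCLike.re (inner ℂ ((ξ : E)) (θ (ξ : E)) : ℂ) ≤ ‖ξ‖ * ‖ξ‖ := by
      calc RCLike.re (inner ℂ ((ξ : E)) (θ (ξ : E)) : ℂ)
          ≤ ‖(inner ℂ ((ξ : E)) (θ (ξ : E)) : ℂ)‖ := RCLike.re_le_norm _
        _ ≤ ‖(ξ : E)‖ * ‖θ (ξ : E)‖ := norm_inner_le_norm _ _
        _ = ‖ξ‖ * ‖ξ‖ := by rw [θ.norm_map, Submodule.coe_norm]
    have h3 : ‖q ξ‖ ^ 2 ≤ ‖ξ‖ ^ 2 := by rw [h1, sq]; exact h2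
    exact (pow_le_pow_iff_left₀ (norm_nonneg _) (norm_nonneg _) two_ne_zero).mp h3
  -- `S ^ k` is θ-symmetric
  have hpow : ∀ (k : ℕ) (ξ η : Ep),
      (inner ℂ (((S ^ k) ξ : E)) (θ (η : E)) : ℂ)
        = inner ℂ ((ξ : E)) (θ (((S ^ k) η : E))) := by
    intro k
    induction k with
    | zero => intro ξ η; simp
    | succ n ih =>
      intro ξ η
      have e1 : (S ^ (n + 1)) ξ = (S ^ n) (S ξ) := by
        rw [pow_succ]; rfl
      have e2 : (S ^ (n + 1)) η = S ((S ^ n) η) := by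
        rw [pow_succ']; rfl
      rw [e1, e2, ih (S ξ) η, hsym]
  -- the basic Cauchy–Schwarz step
  have hsq : ∀ (k : ℕ) (ξ : Ep),
      ‖q ((S ^ k) ξ)‖ ^ 2 ≤ ‖q ξ‖ * ‖q ((S ^ (2 * k)) ξ)‖ := by
    intro k ξ
    have e1 : (S ^ (2 * k)) ξ = (S ^ k) ((S ^ k) ξ) := by
      rw [two_mul, pow_add]; rfl
    have h1 : ‖q ((S ^ k) ξ)‖ ^ 2
        = RCLike.re (inner ℂ (q ξ) (q ((S ^ (2 * k)) ξ)) : ℂ) := by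
      have h0 : (inner ℂ (q ((S ^ k) ξ)) (q ((S ^ k) ξ)) : ℂ)
          = inner ℂ (q ξ) (q ((S ^ (2 * k)) ξ)) := by
        rw [hq, hq, hpow k ξ ((S ^ k) ξ), e1]
      rw [← inner_self_eq_norm_sq (𝕜 := ℂ), h0]
    calc ‖q ((S ^ k) ξ)‖ ^ 2
        = RCLike.re (inner ℂ (q ξ) (q ((S ^ (2 * k)) ξ)) : ℂ) := h1
      _ ≤ ‖(inner ℂ (q ξ) (q ((S ^ (2 * k)) ξ)) : ℂ)‖ := RCLike.re_le_norm _
      _ ≤ ‖q ξ‖ * ‖q ((S ^ (2 * k)) ξ)‖ := norm_inner_le_norm _ _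
  -- iterated estimate
  have hchain : ∀ (n : ℕ) (ξ : Ep),
      ‖q (S ξ)‖ ^ (2 ^ n) ≤ ‖q ξ‖ ^ (2 ^ n - 1) * ‖q ((S ^ (2 ^ n)) ξ)‖ := by
    intro n
    induction n with
    | zero => intro ξ; simp
    | succ n ih =>
      intro ξ
      have h2n : 1 ≤ 2 ^ n := Nat.one_le_two_pow
      have e1 : (2 : ℕ) ^ (n + 1) = 2 ^ n * 2 := by ring
      calc ‖q (S ξ)‖ ^ (2 ^ (n + 1))
          = (‖q (S ξ)‖ ^ (2 ^ n)) ^ 2 := by rw [e1, pow_mul]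
        _ ≤ (‖q ξ‖ ^ (2 ^ n - 1) * ‖q ((S ^ (2 ^ n)) ξ)‖) ^ 2 := by
            apply pow_le_pow_left₀ (by positivity) (ih ξ)
        _ = ‖q ξ‖ ^ (2 * (2 ^ n - 1)) * ‖q ((S ^ (2 ^ n)) ξ)‖ ^ 2 := by
            rw [mul_pow, ← pow_mul, mul_comm (2 ^ n - 1) 2]
        _ ≤ ‖q ξ‖ ^ (2 * (2 ^ n - 1)) * (‖q ξ‖ * ‖q ((S ^ (2 * 2 ^ n)) ξ)‖) := by
            apply mul_le_mul_of_nonneg_left (hsq (2 ^ n) ξ) (by positivity)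
        _ = ‖q ξ‖ ^ (2 ^ (n + 1) - 1) * ‖q ((S ^ (2 ^ (n + 1))) ξ)‖ := by
            have e2 : (2 : ℕ) ^ (n + 1) = 2 * 2 ^ n := by ring
            have e3 : 2 * (2 ^ n - 1) + 1 = 2 * 2 ^ n - 1 := by omega
            rw [e2, ← mul_assoc, ← pow_succ, e3]
  -- the key bound
  have key : ∀ ξ : Ep, ‖q (S ξ)‖ ≤ ‖S‖ * ‖q ξ‖ := by
    intro ξ
    set A := ‖S‖ with hA
    set a0 := ‖q ξ‖ with ha0
    set a1 := ‖q (S ξ)‖ with ha1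
    have ha0n : 0 ≤ a0 := by rw [ha0]; exact norm_nonneg _
    have ha1n : 0 ≤ a1 := by rw [ha1]; exact norm_nonneg _
    have hAn : 0 ≤ A := by rw [hA]; exact ContinuousLinearMap.opNorm_nonneg S
    have hbound : ∀ n : ℕ, a1 ^ (2 ^ n) ≤ a0 ^ (2 ^ n - 1) * (A ^ (2 ^ n) * ‖ξ‖) := by
      intro n
      have hSle : ‖q ((S ^ (2 ^ n)) ξ)‖ ≤ A ^ (2 ^ n) * ‖ξ‖ := by
        calc ‖q ((S ^ (2 ^ n)) ξ)‖ ≤ ‖(S ^ (2 ^ n)) ξ‖ := hqnorm _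
          _ ≤ ‖S ^ (2 ^ n)‖ * ‖ξ‖ := (S ^ (2 ^ n)).le_opNorm ξ
          _ ≤ A ^ (2 ^ n) * ‖ξ‖ := by
              apply mul_le_mul_of_nonneg_right _ (norm_nonneg _)
              rw [hA]
              exact norm_pow_le' S (Nat.pos_of_ne_zero (by positivity))
      calc a1 ^ (2 ^ n) ≤ a0 ^ (2 ^ n - 1) * ‖q ((S ^ (2 ^ n)) ξ)‖ := hchain n ξ
        _ ≤ a0 ^ (2 ^ n - 1) * (A ^ (2 ^ n) * ‖ξ‖) :=
            mul_le_mul_of_nonneg_left hSle (by positivity)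
    rcases eq_or_lt_of_le ha0n with h0 | h0
    · -- a0 = 0 case
      have h1 := hbound 1
      simp only [← h0] at h1
      norm_num at h1
      have : a1 ^ 2 ≤ 0 := by
        calc a1 ^ (2:ℕ) = a1 ^ ((2:ℕ) ^ (1:ℕ)) := by norm_num
          _ ≤ (0:ℝ) ^ (2 ^ (1:ℕ) - 1) * (A ^ (2 ^ (1:ℕ)) * ‖ξ‖) := by
              have := hbound 1; rw [← h0] at this; exact this
          _ = 0 := by norm_num
      have : a1 = 0 := by nlinarith
      rw [this, ← h0]; simp
    · -- a0 > 0 case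
      by_contra hcon
      push_neg at hcon
      have hApos : 0 < A := by
        rcases eq_or_lt_of_le hAn with hA0 | hA0
        · exfalso
          have ha1z : a1 ≤ 0 := by
            rw [ha1]
            calc ‖q (S ξ)‖ ≤ ‖S ξ‖ := hqnorm _
              _ ≤ ‖S‖ * ‖ξ‖ := S.le_opNorm ξ
              _ = 0 := by rw [← hA, ← hA0, zero_mul]
          nlinarith
        · exact hA0
      set t := a1 / (A * a0) with ht
      have htpos : 1 < t := by
        rw [ht, lt_div_iff₀ (by positivity)]
        linarith [hcon]
      set M := ‖ξ‖ / a0 with hM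
      have htM : ∀ n : ℕ, t ^ (2 ^ n) ≤ M := by
        intro n
        have hpowa0 : a0 ^ (2 ^ n : ℕ) = a0 ^ (2 ^ n - 1) * a0 := by
          rw [← pow_succ]; congr 1; have : 1 ≤ 2 ^ n := Nat.one_le_two_pow; omega
        have h2 : a1 ^ (2 ^ n) ≤ M * (A * a0) ^ (2 ^ n) := by
          calc a1 ^ (2 ^ n) ≤ a0 ^ (2 ^ n - 1) * (A ^ (2 ^ n) * ‖ξ‖) := hbound n
            _ = M * (A * a0) ^ (2 ^ n) := by
                rw [hM, mul_pow, hpowa0]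
                field_simp
        rw [ht, div_pow, div_le_iff₀ (by positivity)]
        exact h2
      obtain ⟨k, hk⟩ := pow_unbounded_of_one_lt M htpos
      have hkk : t ^ k ≤ t ^ (2 ^ k) :=
        pow_le_pow_right₀ htpos.le (Nat.le_of_lt Nat.lt_two_pow_self)
      have := htM k
      linarith
  -- q maps N into N through S
  have hker : ∀ ξ : Ep, q ξ = 0 → q (S ξ) = 0 := by
    intro ξ h
    have := key ξ
    rw [h] at this
    simp only [norm_zero, mul_zero] at this
    exact norm_le_zero_iff.mp this
  constructor
  · intro ξ h0
    have hq0 : q ξ = 0 := by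
      have h1 : (inner ℂ (q ξ) (q ξ) : ℂ) = 0 := by rw [hq]; exact h0
      exact inner_self_eq_zero.mp h1
    have h2 : q (S ξ) = 0 := hker ξ hq0
    rw [← hq, h2]
    simp
  · -- construct Shat
    set T : Ep →ₗ[ℂ] F := q ∘ₗ (S : Ep →ₗ[ℂ] Ep) with hT
    have hle : LinearMap.ker q ≤ LinearMap.ker T := by
      intro ξ hξ
      rw [LinearMap.mem_ker] at hξ ⊢
      exact hker ξ hξ
    set e0 := q.quotKerEquivRange with he0
    set g0 : (LinearMap.range q) →ₗ[ℂ] F :=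
      ((LinearMap.ker q).liftQ T hle) ∘ₗ (e0.symm : (LinearMap.range q) →ₗ[ℂ] _) with hg0def
    have hg0 : ∀ ξ : Ep, g0 ⟨q ξ, LinearMap.mem_range_self q ξ⟩ = q (S ξ) := by
      intro ξ
      have hmk : e0 (Submodule.Quotient.mk ξ) = ⟨q ξ, LinearMap.mem_range_self q ξ⟩ := by
        apply Subtype.ext
        exact q.quotKerEquivRange_apply_mk ξ
      have hmk' : e0.symm ⟨q ξ, LinearMap.mem_range_self q ξ⟩ = Submodule.Quotient.mk ξ := by
        rw [LinearEquiv.symm_apply_eq, hmk]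
      simp only [hg0def, LinearMap.comp_apply, LinearEquiv.coe_coe, hmk',
        Submodule.liftQ_apply, hT, LinearMap.comp_apply, ContinuousLinearMap.coe_coe]
    have hg0b : ∀ x : (LinearMap.range q), ‖g0 x‖ ≤ ‖S‖ * ‖x‖ := by
      intro x
      obtain ⟨ξ, hξ⟩ := LinearMap.mem_range.mp x.2
      have hx : x = ⟨q ξ, LinearMap.mem_range_self q ξ⟩ := Subtype.ext hξ.symm
      rw [hx, hg0 ξ]
      have : ‖(⟨q ξ, LinearMap.mem_range_self q ξ⟩ : LinearMap.range q)‖ = ‖q ξ‖ := rfl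
      rw [this]
      exact key ξ
    set g : (LinearMap.range q) →L[ℂ] F := g0.mkContinuous ‖S‖ hg0b with hgdef
    have hg : ∀ ξ : Ep, g ⟨q ξ, LinearMap.mem_range_self q ξ⟩ = q (S ξ) := hg0
    have hgnorm : ‖g‖ ≤ ‖S‖ := g0.mkContinuous_norm_le (norm_nonneg S) hg0b
    set e' : (LinearMap.range q) →L[ℂ] F := (LinearMap.range q).subtypeL with he'
    have hN : ∀ x : (LinearMap.range q), ‖x‖ ≤ ((1 : NNReal) : ℝ) * ‖e' x‖ := by
      intro x; simp [he']
    have hdense' : DenseRange ⇑e' := by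
      have hr : Set.range ⇑e' = Set.range ⇑q := by
        ext y
        constructor
        · rintro ⟨x, rfl⟩
          obtain ⟨ξ, hξ⟩ := LinearMap.mem_range.mp x.2
          exact ⟨ξ, by simp [he', hξ]⟩
        · rintro ⟨ξ, rfl⟩
          exact ⟨⟨q ξ, LinearMap.mem_range_self q ξ⟩, rfl⟩
      unfold DenseRange
      rw [hr]
      exact hqdense
    set Shat : F →L[ℂ] F :=
      g.extend e'
      with hShatdef
    have hShat : ∀ ξ : Ep, Shat (q ξ) = q (S ξ) := by
      intro ξ
      have : q ξ = e' ⟨q ξ, LinearMap.mem_range_self q ξ⟩ := rfl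
      rw [hShatdef, this, ContinuousLinearMap.extend_eq _ hdense' (ContinuousLinearMap.isUniformEmbedding_of_bound e' hN).isUniformInducing, hg]
    refine ⟨Shat, hShat, ?_, ?_⟩
    · -- symmetry
      have h1 : ∀ (ξ : Ep) (y : F), (inner ℂ (Shat (q ξ)) y : ℂ) = inner ℂ (q ξ) (Shat y) := by
        intro ξ
        have heq : (fun y : F => (inner ℂ (Shat (q ξ)) y : ℂ))
            = fun y : F => (inner ℂ (q ξ) (Shat y) : ℂ) := by
          apply hqdense.equalizer
          · exact continuous_const.inner continuous_id
          · exact continuous_const.inner Shat.continuous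
          · funext η
            simp only [Function.comp_apply]
            rw [hShat ξ, hShat η, hq, hq, hsym]
        exact fun y => congrFun heq y
      intro x y
      have heq : (fun x : F => (inner ℂ (Shat x) y : ℂ))
          = fun x : F => (inner ℂ x (Shat y) : ℂ) := by
        apply hqdense.equalizer
        · exact (Shat.continuous.inner continuous_const)
        · exact continuous_id.inner continuous_const
        · funext ξ
          simp only [Function.comp_apply]
          exact h1 ξ y
      exact congrFun heq x
    · -- norm bound
      have h2 := ContinuousLinearMap.opNorm_extend_le g hdense' hN
      rw [← hShatdef] at h2
      calc ‖Shat‖ ≤ ((1 : NNReal) : ℝ) * ‖g‖ := h2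
        _ = ‖g‖ := by norm_num
        _ ≤ ‖S‖ := hgnorm
end

section
/- Let (E, E₊, θ) be a reflection positive Hilbert space with quotient map q : E₊ → Ê as above. If U is a unitary operator on E with U(E₊) = E₊ and θUθ = U⁻¹, then the OS transforms of U and U⁻¹ are well-defined contractions on Ê that are mutually inverse, and the induced operator Û on Ê satisfies Û² = id. -/
open scoped ComplexOrder

/-- Auxiliary: the OS transform of an isometry `W` preserving `E₊` with `θW = W⁻¹θ`
is a well-defined contraction on `F`. -/
lemma os_contract_aux {E F : Type*} [NormedAddCommGroup E] [InnerProductSpace ℂ E]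
    [NormedAddCommGroup F] [InnerProductSpace ℂ F] [CompleteSpace F]
    (θ : E ≃ₗᵢ[ℂ] E)
    (Ep : Submodule ℂ E)
    (q : Ep →ₗ[ℂ] F)
    (hq : ∀ ξ η : Ep, (inner ℂ (q ξ) (q η) : ℂ) = inner ℂ (ξ : E) (θ (η : E)))
    (hqdense : DenseRange (⇑q))
    (W : E ≃ₗᵢ[ℂ] E) (hWEp : ∀ x ∈ Ep, W x ∈ Ep)
    (hWθ : ∀ x, θ (W x) = W.symm (θ x)) :
    ∃ What : F →L[ℂ] F,
      (∀ ξ : Ep, What (q ξ) = q ⟨W (ξ : E), hWEp _ ξ.2⟩) ∧ (∀ x, ‖What x‖ ≤ ‖x‖) := by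
  classical
  -- the restriction of `W` to `Ep`
  set Wep : Ep →ₗ[ℂ] Ep :=
    { toFun := fun ξ => ⟨W (ξ : E), hWEp _ ξ.2⟩
      map_add' := fun x y => by ext; simp
      map_smul' := fun c x => by ext; simp } with hWepdef
  have hWepc : ∀ ξ : Ep, ((Wep ξ : Ep) : E) = W (ξ : E) := fun ξ => rfl
  -- `q` is norm-nonincreasing from `E`
  have hnq : ∀ η : Ep, ‖q η‖ ≤ ‖(η : E)‖ := by
    intro η
    have h1 : ‖q η‖ ^ 2 = RCLike.re (inner ℂ (q η) (q η) : ℂ) :=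
      (inner_self_eq_norm_sq (𝕜 := ℂ) (q η)).symm
    have h2 : RCLike.re (inner ℂ (η : E) (θ (η : E)) : ℂ) ≤ ‖(η : E)‖ * ‖θ (η : E)‖ :=
      le_trans (RCLike.re_le_norm _) (norm_inner_le_norm _ _)
    have h3 : ‖q η‖ ^ 2 ≤ ‖(η : E)‖ ^ 2 := by
      rw [h1, hq]
      simpa [θ.norm_map, sq] using h2
    exact (pow_le_pow_iff_left₀ (norm_nonneg _) (norm_nonneg _) two_ne_zero).mp h3
  -- iterates of `Wep` preserve norms
  have hWn : ∀ (n : ℕ) (ξ : Ep), ‖(((Wep ^ n) ξ : Ep) : E)‖ = ‖(ξ : E)‖ := by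
    intro n
    induction n with
    | zero => intro ξ; simp
    | succ n ih =>
      intro ξ
      rw [pow_succ, Module.End.mul_apply, ih (Wep ξ), hWepc, W.norm_map]
  -- one-step shifting of `θ` through `W`
  have hstep : ∀ (c : E) (d : Ep),
      (inner ℂ c (θ ((Wep d : Ep) : E)) : ℂ) = inner ℂ (W c) (θ (d : E)) := by
    intro c d
    rw [hWepc, hWθ]
    rw [← W.inner_map_map c (W.symm (θ (d : E))), W.apply_symm_apply]
  -- the doubling identity
  have hdouble : ∀ (n : ℕ) (ξ η : Ep),
      (inner ℂ (((Wep ^ n) ξ : Ep) : E) (θ (((Wep ^ n) η : Ep) : E)) : ℂ)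
        = inner ℂ (((Wep ^ n) ((Wep ^ n) ξ) : Ep) : E) (θ ((η : Ep) : E)) := by
    intro n
    induction n with
    | zero => intro ξ η; simp
    | succ n ih =>
      intro ξ η
      have e1 : ∀ z : Ep, (Wep ^ (n + 1)) z = (Wep ^ n) (Wep z) := by
        intro z; rw [pow_succ, Module.End.mul_apply]
      have e2 : ∀ z : Ep, (Wep ^ (n + 1)) z = Wep ((Wep ^ n) z) := by
        intro z; rw [pow_succ', Module.End.mul_apply]
      rw [e1 ξ, e1 η, ih (Wep ξ) (Wep η), hstep, e2 ((Wep ^ n) (Wep ξ)), hWepc]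
  -- the contraction property
  have hcontr : ∀ ξ : Ep, ‖q (Wep ξ)‖ ≤ ‖q ξ‖ := by
    intro ξ
    set a : ℕ → ℝ := fun n => ‖q ((Wep ^ n) ξ)‖ with ha
    have ha0 : ∀ n, (0 : ℝ) ≤ a n := fun n => norm_nonneg _
    have haB : ∀ n, a n ≤ ‖(ξ : E)‖ := fun n => le_of_le_of_eq (hnq _) (hWn n ξ)
    have hsq : ∀ n, a n ^ 2 ≤ a (n + n) * a 0 := by
      intro n
      have h1 : a n ^ 2 = RCLike.re (inner ℂ (q ((Wep ^ n) ξ)) (q ((Wep ^ n) ξ)) : ℂ) :=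
        (inner_self_eq_norm_sq (𝕜 := ℂ) _).symm
      have h2 : (inner ℂ (q ((Wep ^ n) ξ)) (q ((Wep ^ n) ξ)) : ℂ)
          = inner ℂ (q ((Wep ^ (n + n)) ξ)) (q ((Wep ^ 0) ξ)) := by
        rw [hq, hq, hdouble n ξ ξ, pow_add, Module.End.mul_apply]
        simp
      have h3 : RCLike.re (inner ℂ (q ((Wep ^ (n + n)) ξ)) (q ((Wep ^ 0) ξ)) : ℂ)
          ≤ a (n + n) * a 0 :=
        le_trans (RCLike.re_le_norm _) (norm_inner_le_norm _ _)
      rw [h1, h2]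
      exact h3
    have hiter : ∀ k, a 1 ^ (2 ^ k) ≤ a (2 ^ k) * a 0 ^ (2 ^ k - 1) := by
      intro k
      induction k with
      | zero => simp
      | succ k ih =>
        have hm : 1 ≤ 2 ^ k := Nat.one_le_two_pow
        have h2m : 2 ^ (k + 1) = 2 ^ k + 2 ^ k := by ring
        have hexp : 2 * (2 ^ k - 1) + 1 = 2 ^ k + 2 ^ k - 1 := by
          omega
        calc a 1 ^ 2 ^ (k + 1) = (a 1 ^ 2 ^ k) ^ 2 := by
              rw [← pow_mul]; ring_nf
          _ ≤ (a (2 ^ k) * a 0 ^ (2 ^ k - 1)) ^ 2 :=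
              pow_le_pow_left₀ (pow_nonneg (ha0 1) _) ih 2
          _ = a (2 ^ k) ^ 2 * a 0 ^ (2 * (2 ^ k - 1)) := by
              rw [mul_pow, ← pow_mul]; ring_nf
          _ ≤ (a (2 ^ k + 2 ^ k) * a 0) * a 0 ^ (2 * (2 ^ k - 1)) :=
              mul_le_mul_of_nonneg_right (hsq _) (pow_nonneg (ha0 0) _)
          _ = a (2 ^ (k + 1)) * a 0 ^ (2 ^ (k + 1) - 1) := by
              rw [h2m, mul_assoc, ← pow_succ', hexp]
              
    have key : a 1 ≤ a 0 := by
      by_contra hcon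
      push_neg at hcon
      rcases eq_or_lt_of_le (ha0 0) with h0 | h0
      · have h1 := hsq 1
        rw [← h0, mul_zero] at h1
        have h2 : a 1 = 0 := by nlinarith [ha0 1]
        rw [h2] at hcon
        exact absurd hcon (not_lt.mpr (ha0 0))
      · have hr : 1 < a 1 / a 0 := (one_lt_div h0).mpr hcon
        obtain ⟨nn, hn⟩ := pow_unbounded_of_one_lt (‖(ξ : E)‖ / a 0) hr
        have hle : (a 1 / a 0) ^ (2 ^ nn) ≤ ‖(ξ : E)‖ / a 0 := by
          have h1 : a 1 ^ (2 ^ nn) ≤ ‖(ξ : E)‖ * a 0 ^ (2 ^ nn - 1) :=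
            le_trans (hiter nn) (mul_le_mul_of_nonneg_right (haB _)
              (pow_nonneg (ha0 0) _))
          have hN : (2 : ℕ) ^ nn = (2 ^ nn - 1) + 1 := by
            have := Nat.one_le_two_pow (n := nn); omega
          rw [div_pow, div_le_div_iff₀ (pow_pos h0 _) h0]
          calc a 1 ^ 2 ^ nn * a 0 ≤ (‖(ξ : E)‖ * a 0 ^ (2 ^ nn - 1)) * a 0 :=
                mul_le_mul_of_nonneg_right h1 (ha0 0)
            _ = ‖(ξ : E)‖ * a 0 ^ (2 ^ nn) := by
                rw [mul_assoc, ← pow_succ, ← hN]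
        have hge : (a 1 / a 0) ^ nn ≤ (a 1 / a 0) ^ (2 ^ nn) :=
          pow_le_pow_right₀ (le_of_lt hr) (le_of_lt (Nat.lt_two_pow_self (n := nn)))
        linarith
    calc ‖q (Wep ξ)‖ = a 1 := by rw [ha]; simp
      _ ≤ a 0 := key
      _ = ‖q ξ‖ := by rw [ha]; simp
  -- factor through the range of `q`
  set g : Ep →ₗ[ℂ] F := q.comp Wep with hg
  have hker : LinearMap.ker q ≤ LinearMap.ker g := by
    intro x hx
    rw [LinearMap.mem_ker] at hx ⊢
    have hx' : ‖q x‖ = 0 := by rw [hx, norm_zero]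
    have h2 : ‖q (Wep x)‖ ≤ 0 := hx' ▸ hcontr x
    have : q (Wep x) = 0 := norm_le_zero_iff.mp h2
    simpa [hg] using this
  set T₀ : (LinearMap.range q) →ₗ[ℂ] F :=
    (Submodule.liftQ (LinearMap.ker q) g hker).comp
      (q.quotKerEquivRange).symm.toLinearMap with hT₀def
  have hT₀ : ∀ (ξ : Ep) (h : q ξ ∈ LinearMap.range q), T₀ ⟨q ξ, h⟩ = q (Wep ξ) := by
    intro ξ h
    have hsymm := q.quotKerEquivRange_symm_apply_image ξ h
    simp [hT₀def, hsymm, hg]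
  have hT₀b : ∀ y : LinearMap.range q, ‖T₀ y‖ ≤ 1 * ‖(y : F)‖ := by
    rintro ⟨y, hy⟩
    obtain ⟨ξ, rfl⟩ := hy
    rw [hT₀ ξ ⟨ξ, rfl⟩, one_mul]
    exact hcontr ξ
  set T : (LinearMap.range q) →L[ℂ] F := T₀.mkContinuous 1 hT₀b with hTdef
  set e : (LinearMap.range q) →L[ℂ] F := (LinearMap.range q).subtypeL with hedef
  have h_e : IsUniformInducing (⇑e) := isometry_subtype_coe.isUniformInducing
  have h_dense : DenseRange (⇑e) := by
    have hre : Set.range (⇑e) = Set.range (⇑q) := by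
      ext y
      constructor
      · rintro ⟨⟨z, hz⟩, rfl⟩
        exact hz
      · intro hy
        exact ⟨⟨y, hy⟩, rfl⟩
    unfold DenseRange
    rw [hre]
    exact hqdense
  refine ⟨T.extend e, ?_, ?_⟩
  · intro ξ
    have hmem : q ξ ∈ LinearMap.range q := LinearMap.mem_range_self q ξ
    have he : q ξ = e ⟨q ξ, hmem⟩ := rfl
    rw [he, ContinuousLinearMap.extend_eq (h_dense := h_dense) (h_e := h_e)]
    show T₀ ⟨q ξ, hmem⟩ = _
    rw [hT₀ ξ hmem]
    rfl
  · intro x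
    refine isClosed_property (p := fun y => ‖T.extend e y‖ ≤ ‖y‖)
      hqdense ?_ ?_ x
    · exact isClosed_le (ContinuousLinearMap.continuous _).norm continuous_norm
    · intro ξ
      have hmem : q ξ ∈ LinearMap.range q := LinearMap.mem_range_self q ξ
      have he : q ξ = e ⟨q ξ, hmem⟩ := rfl
      rw [he, ContinuousLinearMap.extend_eq (h_dense := h_dense) (h_e := h_e)]
      show ‖T₀ ⟨q ξ, hmem⟩‖ ≤ _
      rw [hT₀ ξ hmem]
      exact hcontr ξ

/-- OS transform of a unitary `U` with `U(E₊) = E₊` and `θUθ = U⁻¹`: the OS transforms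
of `U` and `U⁻¹` are well-defined contractions on `Ê`, mutually inverse, and `Û² = id`. -/
theorem stmt3 {E F : Type*} [NormedAddCommGroup E] [InnerProductSpace ℂ E] [CompleteSpace E]
    [NormedAddCommGroup F] [InnerProductSpace ℂ F] [CompleteSpace F]
    (θ : E ≃ₗᵢ[ℂ] E) (hθ : ∀ x, θ (θ x) = x)
    (Ep : Submodule ℂ E) (hcl : IsClosed (Ep : Set E))
    (hpos : ∀ ξ ∈ Ep, 0 ≤ (inner ℂ ξ (θ ξ) : ℂ))
    (q : Ep →ₗ[ℂ] F)
    (hq : ∀ ξ η : Ep, (inner ℂ (q ξ) (q η) : ℂ) = inner ℂ (ξ : E) (θ (η : E)))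
    (hqdense : DenseRange (⇑q))
    (U : E ≃ₗᵢ[ℂ] E) (hUEp : ∀ x : E, x ∈ Ep ↔ U x ∈ Ep)
    (hUθ : ∀ x, θ (U (θ x)) = U.symm x) :
    ∃ Uhat Vhat : F →L[ℂ] F,
      (∀ ξ : Ep, Uhat (q ξ) = q ⟨U (ξ : E), (hUEp (ξ : E)).mp ξ.2⟩) ∧
      (∀ ξ : Ep, Vhat (q ξ) = q ⟨U.symm (ξ : E), (hUEp (U.symm (ξ : E))).mpr
          (by rw [U.apply_symm_apply]; exact ξ.2)⟩) ∧
      ‖Uhat‖ ≤ 1 ∧ ‖Vhat‖ ≤ 1 ∧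
      Uhat.comp Vhat = ContinuousLinearMap.id ℂ F ∧
      Vhat.comp Uhat = ContinuousLinearMap.id ℂ F ∧
      Uhat.comp Uhat = ContinuousLinearMap.id ℂ F := by
  have hUθ' : ∀ x, θ (U x) = U.symm (θ x) := by
    intro x
    have h := hUθ (θ x)
    rwa [hθ x] at h
  have hVθ : ∀ x, θ (U.symm x) = U (θ x) := by
    intro x
    conv_rhs => rw [← U.apply_symm_apply x]
    rw [hUθ' (U.symm x), U.apply_symm_apply]
  obtain ⟨Uhat, hU, hUb⟩ := os_contract_aux θ Ep q hq hqdense U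
    (fun x hx => (hUEp x).mp hx) hUθ'
  obtain ⟨Vhat, hV, hVb⟩ := os_contract_aux θ Ep q hq hqdense U.symm
    (fun x hx => (hUEp _).mpr (by rw [U.apply_symm_apply]; exact hx))
    (by intro x; rw [hVθ, U.symm_symm])
  have hUV : Uhat.comp Vhat = ContinuousLinearMap.id ℂ F := by
    ext x
    show Uhat (Vhat x) = x
    refine isClosed_property (p := fun y => Uhat (Vhat y) = y) hqdense ?_ ?_ x
    · exact isClosed_eq (Uhat.continuous.comp Vhat.continuous) continuous_id
    · intro ξ
      show Uhat (Vhat (q ξ)) = q ξ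
      rw [hV ξ, hU _]
      congr 1
      ext
      simp
  have hVU : Vhat.comp Uhat = ContinuousLinearMap.id ℂ F := by
    ext x
    show Vhat (Uhat x) = x
    refine isClosed_property (p := fun y => Vhat (Uhat y) = y) hqdense ?_ ?_ x
    · exact isClosed_eq (Vhat.continuous.comp Uhat.continuous) continuous_id
    · intro ξ
      show Vhat (Uhat (q ξ)) = q ξ
      rw [hU ξ, hV _]
      congr 1
      ext
      simp
  have hVU' : ∀ x, Vhat (Uhat x) = x := by
    intro x
    have h := ContinuousLinearMap.ext_iff.mp hVU x
    simpa using h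
  have hiso : ∀ x, ‖Uhat x‖ = ‖x‖ := by
    intro x
    refine le_antisymm (hUb x) ?_
    calc ‖x‖ = ‖Vhat (Uhat x)‖ := by rw [hVU']
      _ ≤ ‖Uhat x‖ := hVb _
  have hsymm1 : ∀ (ξ : Ep) (y : F), (inner ℂ (Uhat (q ξ)) y : ℂ) = inner ℂ (q ξ) (Uhat y) := by
    intro ξ y
    refine isClosed_property
      (p := fun z => (inner ℂ (Uhat (q ξ)) z : ℂ) = inner ℂ (q ξ) (Uhat z)) hqdense ?_ ?_ y
    · exact isClosed_eq (Continuous.inner continuous_const continuous_id)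
        (Continuous.inner continuous_const Uhat.continuous)
    · intro η
      rw [hU ξ, hU η, hq, hq]
      show (inner ℂ (U (ξ : E)) (θ ((η : Ep) : E)) : ℂ) = inner ℂ ((ξ : Ep) : E) (θ (U (η : E)))
      rw [hUθ']
      conv_lhs => rw [← U.apply_symm_apply (θ ((η : Ep) : E))]
      rw [U.inner_map_map]
  have hsymm : ∀ x y : F, (inner ℂ (Uhat x) y : ℂ) = inner ℂ x (Uhat y) := by
    intro x y
    refine isClosed_property
      (p := fun z => (inner ℂ (Uhat z) y : ℂ) = inner ℂ z (Uhat y)) hqdense ?_ ?_ x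
    · exact isClosed_eq (Continuous.inner Uhat.continuous continuous_const)
        (Continuous.inner continuous_id continuous_const)
    · intro ξ
      exact hsymm1 ξ y
  have hUU : Uhat.comp Uhat = ContinuousLinearMap.id ℂ F := by
    ext x
    show Uhat (Uhat x) = x
    have h0 : (inner ℂ (Uhat (Uhat x) - x) (Uhat (Uhat x) - x) : ℂ) = 0 := by
      rw [inner_sub_left, inner_sub_right, inner_sub_right]
      have e1 : (inner ℂ (Uhat (Uhat x)) x : ℂ) = inner ℂ (Uhat x) (Uhat x) := hsymm (Uhat x) x
      have e2 : (inner ℂ x (Uhat (Uhat x)) : ℂ) = inner ℂ (Uhat x) (Uhat x) :=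
        (hsymm x (Uhat x)).symm
      rw [e1, e2]
      simp only [inner_self_eq_norm_sq_to_K, hiso]
      ring
    have h1 := inner_self_eq_zero.mp h0
    exact sub_eq_zero.mp h1
  refine ⟨Uhat, Vhat, fun ξ => hU ξ, fun ξ => hV ξ, ?_, ?_, hUV, hVU, hUU⟩
  · exact Uhat.opNorm_le_bound zero_le_one (fun x => by rw [one_mul]; exact hUb x)
  · exact Vhat.opNorm_le_bound zero_le_one (fun x => by rw [one_mul]; exact hVb x)
end

section
/- Let K : X × X → ℂ be a positive definite kernel on a set X, τ : X → X an involution with K(τx, τy) = K(x, y), and X₊ ⊆ X a subset such that K^τ(x, y) := K(x, τy) is positive definite on X₊ × X₊. Then in the reproducing kernel Hilbert space H_K: (a) θf := f ∘ τ defines a unitary involution on H_K; (b) the closed subspace E₊ generated by {K_x : x ∈ X₊} satisfies ⟨ξ, θξ⟩ ≥ 0 for all ξ ∈ E₊, so (H_K, E₊, θ) is a reflection positive Hilbert space. -/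
open scoped ComplexOrder

lemma inner_lc_aux {X H : Type*} [NormedAddCommGroup H] [InnerProductSpace ℂ H]
    (k₁ k₂ : X → H) (f g : X →₀ ℂ) :
    (inner ℂ (Finsupp.linearCombination ℂ k₁ f) (Finsupp.linearCombination ℂ k₂ g) : ℂ)
    = ∑ x ∈ f.support, ∑ y ∈ g.support,
        (starRingEnd ℂ) (f x) * g y * inner ℂ (k₁ x) (k₂ y) := by
  rw [Finsupp.linearCombination_apply, Finsupp.linearCombination_apply,
    Finsupp.sum, Finsupp.sum, sum_inner]
  refine Finset.sum_congr rfl fun x _ => ?_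
  rw [inner_sum]
  refine Finset.sum_congr rfl fun y _ => ?_
  rw [inner_smul_left, inner_smul_right]; ring

/-- If `K` is a positive definite kernel on `X` (realized by a total family
`k : X → H` in a Hilbert space with `⟨k x, k y⟩ = K(x,y)`), `τ` an involution
leaving `K` invariant, and the twisted kernel `K^τ(x,y) = K(x, τy)` is positive
definite on `X₊`, then `θ(k x) = k(τ x)` defines a unitary involution `θ` on `H`
and the closed subspace generated by `{k x : x ∈ X₊}` is θ-positive, i.e.
`(H, E₊, θ)` is a reflection positive Hilbert space. -/
theorem stmt7 {X H : Type*} [NormedAddCommGroup H] [InnerProductSpace ℂ H] [CompleteSpace H]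
    (K : X → X → ℂ) (τ : X → X) (hτ : ∀ x, τ (τ x) = x)
    (hinv : ∀ x y, K (τ x) (τ y) = K x y)
    (k : X → H) (hk : ∀ x y, (inner ℂ (k x) (k y) : ℂ) = K x y)
    (hdense : Dense ((Submodule.span ℂ (Set.range k) : Submodule ℂ H) : Set H))
    (Xplus : Set X)
    (hpos : ∀ (n : ℕ) (x : Fin n → X) (c : Fin n → ℂ), (∀ j, x j ∈ Xplus) →
        0 ≤ ∑ i : Fin n, ∑ j : Fin n, (starRingEnd ℂ) (c i) * c j * K (x i) (τ (x j))) :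
    ∃ θ : H ≃ₗᵢ[ℂ] H, (∀ x, θ (k x) = k (τ x)) ∧ (∀ v, θ (θ v) = v) ∧
      ∀ ξ ∈ (Submodule.span ℂ (k '' Xplus)).topologicalClosure,
        0 ≤ (inner ℂ ξ (θ ξ) : ℂ) := by
  classical
  set S : (X →₀ ℂ) →ₗ[ℂ] H := Finsupp.linearCombination ℂ k with hS
  set T : (X →₀ ℂ) →ₗ[ℂ] H := Finsupp.linearCombination ℂ (fun x => k (τ x)) with hT
  -- key inner product identity
  have key : ∀ f g : X →₀ ℂ, (inner ℂ (T f) (T g) : ℂ) = inner ℂ (S f) (S g) := by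
    intro f g
    rw [hS, hT, inner_lc_aux, inner_lc_aux]
    refine Finset.sum_congr rfl fun x _ => Finset.sum_congr rfl fun y _ => ?_
    rw [hk, hk, hinv]
  -- well-definedness
  have key2 : ∀ f g : X →₀ ℂ, S f = S g → T f = T g := by
    intro f g hfg
    have h0 : (inner ℂ (T f - T g) (T f - T g) : ℂ) = 0 := by
      rw [← map_sub, key, map_sub, hfg, sub_self, inner_zero_right]
    rw [← sub_eq_zero]
    exact inner_self_eq_zero.mp h0
  set D : Submodule ℂ H := Submodule.span ℂ (Set.range k) with hD
  have hmem : ∀ v : D, ∃ f, S f = (v : H) := by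
    intro v
    have hv : (v : H) ∈ LinearMap.range S := by
      rw [hS, Finsupp.range_linearCombination]; exact v.2
    exact hv
  choose rep hrep using hmem
  -- the (pre-extension) linear isometry on D
  have hwd : ∀ (v : D) (f : X →₀ ℂ), S f = (v : H) → T (rep v) = T f :=
    fun v f hf => key2 _ _ (by rw [hrep, hf])
  set θ₀ : D →ₗ[ℂ] H :=
    { toFun := fun v => T (rep v)
      map_add' := by
        intro u v
        show T (rep (u + v)) = T (rep u) + T (rep v)
        have h : T (rep (u + v)) = T (rep u + rep v) := by
          refine hwd _ _ ?_
          rw [map_add, hrep, hrep]; rfl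
        rw [h, map_add]
      map_smul' := by
        intro c v
        show T (rep (c • v)) = c • T (rep v)
        have h : T (rep (c • v)) = T (c • rep v) := by
          refine hwd _ _ ?_
          rw [map_smul, hrep]; rfl
        rw [h, map_smul] } with hθ₀
  have θ₀norm : ∀ v : D, ‖θ₀ v‖ = ‖(v : H)‖ := by
    intro v
    show ‖T (rep v)‖ = ‖(v : H)‖
    rw [@norm_eq_sqrt_re_inner ℂ, @norm_eq_sqrt_re_inner ℂ H _ _ _ ((v : H)), key, hrep]
  -- continuous linear map on D and its extension
  set f₀ : D →L[ℂ] H := (LinearIsometry.mk θ₀ θ₀norm).toContinuousLinearMap with hf₀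
  set e : D →L[ℂ] H := D.subtypeL with he
  have hdr : DenseRange e := by
    have : Set.range e = (D : Set H) := Subtype.range_coe
    rw [DenseRange, this]; exact hdense
  have hui : IsUniformInducing e :=
    (isometry_subtype_coe : Isometry ((↑) : D → H)).isUniformInducing
  set θ' : H →L[ℂ] H := f₀.extend e with hθ'
  have hθ'D : ∀ v : D, θ' (v : H) = θ₀ v := by
    intro v
    have := ContinuousLinearMap.extend_eq f₀ hdr hui v
    exact this
  -- θ' sends k x to k (τ x)
  have hkD : ∀ x, k x ∈ D := fun x =>
    Submodule.subset_span (Set.mem_range_self x)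
  have hSsingle : ∀ x, S (Finsupp.single x 1) = k x := by
    intro x; rw [hS, Finsupp.linearCombination_single, one_smul]
  have hTsingle : ∀ x, T (Finsupp.single x 1) = k (τ x) := by
    intro x; rw [hT, Finsupp.linearCombination_single, one_smul]
  have θk : ∀ x, θ' (k x) = k (τ x) := by
    intro x
    have h1 : θ' (k x) = θ₀ ⟨k x, hkD x⟩ := hθ'D ⟨k x, hkD x⟩
    have h2 : θ₀ ⟨k x, hkD x⟩ = T (rep ⟨k x, hkD x⟩) := rfl
    rw [h1, h2, hwd ⟨k x, hkD x⟩ (Finsupp.single x 1) (by rw [hSsingle]), hTsingle]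
  -- θ' is an involution
  have hinvol : ∀ v, θ' (θ' v) = v := by
    have : θ'.comp θ' = ContinuousLinearMap.id ℂ H := by
      refine ContinuousLinearMap.ext_on hdense ?_
      rintro _ ⟨x, rfl⟩
      show θ' (θ' (k x)) = k x
      rw [θk, θk, hτ]
    intro v
    have := DFunLike.congr_fun this v
    simpa using this
  -- θ' is isometric
  have hnorm : ∀ v, ‖θ' v‖ = ‖v‖ := by
    have hcl : IsClosed {v : H | ‖θ' v‖ = ‖v‖} :=
      isClosed_eq θ'.continuous.norm continuous_norm
    have hsub : (D : Set H) ⊆ {v : H | ‖θ' v‖ = ‖v‖} := by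
      intro v hv
      show ‖θ' v‖ = ‖v‖
      rw [hθ'D ⟨v, hv⟩]
      exact θ₀norm ⟨v, hv⟩
    intro v
    have : v ∈ closure (D : Set H) := by rw [hdense.closure_eq]; trivial
    exact hcl.closure_subset_iff.mpr hsub this
  -- assemble the linear isometry equivalence
  set θeq : H ≃ₗ[ℂ] H := LinearEquiv.ofInvolutive (θ'.toLinearMap) hinvol with hθeq
  have hθeqcoe : ∀ v, θeq v = θ' v := fun _ => rfl
  refine ⟨{ θeq with norm_map' := hnorm }, ?_, ?_, ?_⟩
  · intro x; exact θk x
  · intro v; exact hinvol v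
  -- reflection positivity
  intro ξ hξ
  have hclpos : IsClosed {v : H | 0 ≤ (inner ℂ v (θ' v) : ℂ)} := by
    refine isClosed_le continuous_const ?_
    exact Continuous.inner continuous_id θ'.continuous
  have hsub : (Submodule.span ℂ (k '' Xplus) : Set H) ⊆
      {v : H | 0 ≤ (inner ℂ v (θ' v) : ℂ)} := by
    intro v hv
    obtain ⟨l, hl, hlv⟩ := (Finsupp.mem_span_image_iff_linearCombination ℂ).mp hv
    have hvD : v ∈ D := by
      refine Submodule.span_mono ?_ hv
      rintro _ ⟨x, _, rfl⟩; exact Set.mem_range_self x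
    have hθv : θ' v = T l := by
      rw [hθ'D ⟨v, hvD⟩]
      exact hwd ⟨v, hvD⟩ l hlv
    show 0 ≤ (inner ℂ v (θ' v) : ℂ)
    rw [hθv, ← hlv]
    have hST : (inner ℂ (S l) (T l) : ℂ)
        = ∑ x ∈ l.support, ∑ y ∈ l.support,
            (starRingEnd ℂ) (l x) * l y * K x (τ y) := by
      rw [hS, hT, inner_lc_aux]
      exact Finset.sum_congr rfl fun x _ => Finset.sum_congr rfl fun y _ => by rw [hk]
    rw [show (Finsupp.linearCombination ℂ k) l = S l from rfl, hST]
    -- transfer `hpos` through the enumeration of the support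
    set n := l.support.card with hn
    set eqv := l.support.equivFin with heqv
    set xx : Fin n → X := fun i => (eqv.symm i : X) with hxx
    set cc : Fin n → ℂ := fun i => l (xx i) with hcc
    have hmemX : ∀ j, xx j ∈ Xplus := by
      intro j
      exact (Finsupp.mem_supported ℂ l).mp hl (eqv.symm j).2
    have h1 : ∀ (F : X → ℂ), ∑ i : Fin n, F (xx i) = ∑ x ∈ l.support, F x := by
      intro F
      rw [← Finset.sum_coe_sort l.support F]
      exact Equiv.sum_comp eqv.symm (fun a : l.support => F a)
    have := hpos n xx cc hmemX
    calc (0 : ℂ) ≤ ∑ i : Fin n, ∑ j : Fin n,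
          (starRingEnd ℂ) (cc i) * cc j * K (xx i) (τ (xx j)) := this
      _ = ∑ x ∈ l.support, ∑ j : Fin n,
          (starRingEnd ℂ) (l x) * cc j * K x (τ (xx j)) :=
        h1 (fun x => ∑ j : Fin n, (starRingEnd ℂ) (l x) * cc j * K x (τ (xx j)))
      _ = ∑ x ∈ l.support, ∑ y ∈ l.support,
          (starRingEnd ℂ) (l x) * l y * K x (τ y) :=
        Finset.sum_congr rfl fun x _ =>
          h1 (fun y => (starRingEnd ℂ) (l x) * l y * K x (τ y))
  have hξ' : ξ ∈ closure ((Submodule.span ℂ (k '' Xplus) : Submodule ℂ H) : Set H) := hξ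
  exact hclpos.closure_subset_iff.mpr hsub hξ'
end

section
/- Let (U_t)_{t∈ℝ} be a strongly continuous unitary one-parameter group on a Hilbert space E, θ a unitary involution with θU_tθ = U_{−t}, and E₊ a closed θ-positive subspace with U_t E₊ ⊆ E₊ for t ≥ 0. Assume E₊ is cyclic for U (the span of ∪_t U_t E₊ is dense) and E_fix := {v ∈ E : ∀t, U_t v = v}. Then E_fix ⊆ E₀ := {v ∈ E₊ : θv = v}; in particular every U-fixed vector lies in E₊ and is fixed by θ. -/
open scoped ComplexOrder

open MeasureTheory intervalIntegral Filter

/-- An interval integral of a function valued in a closed submodule lies in the submodule. -/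
lemma integral_mem_closed_submodule {E : Type*} [NormedAddCommGroup E]
    [InnerProductSpace ℂ E] [CompleteSpace E]
    (Ep : Submodule ℂ E) (hEpcl : IsClosed (Ep : Set E)) {f : ℝ → E} {a b : ℝ}
    (hf : IntervalIntegrable f volume a b)
    (hmem : ∀ s ∈ Set.uIcc a b, f s ∈ Ep) :
    (∫ s in a..b, f s) ∈ Ep := by
  haveI : CompleteSpace Ep := hEpcl.completeSpace_coe
  set Q : E →L[ℂ] E := Ep.subtypeL.comp (Ep.orthogonalProjectionOnto) with hQ
  have hQfix : ∀ x : E, x ∈ Ep ↔ Q x = x := by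
    intro x
    constructor
    · intro hx
      exact (Submodule.starProjection_eq_self_iff (K := Ep)).2 hx
    · intro hx
      rw [← hx]
      exact (Ep.orthogonalProjectionOnto x).2
  rw [hQfix]
  rw [← Q.intervalIntegral_comp_comm hf]
  exact intervalIntegral.integral_congr fun s hs => (hQfix (f s)).1 (hmem s hs)

/-- For a reflection positive strongly continuous unitary one-parameter group
`(U_t)` on `(E, E₊, θ)` with `E₊` cyclic, every `U`-fixed vector lies in
`E₀ = {v ∈ E₊ : θ v = v}`. -/
theorem stmt8 {E : Type*} [NormedAddCommGroup E] [InnerProductSpace ℂ E] [CompleteSpace E]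
    (U : ℝ → E ≃ₗᵢ[ℂ] E) (hgrp : ∀ s t : ℝ, ∀ x : E, U (s + t) x = U s (U t x))
    (hcont : ∀ v : E, Continuous fun t : ℝ => U t v)
    (θ : E ≃ₗᵢ[ℂ] E) (hθ : ∀ v, θ (θ v) = v)
    (hcomm : ∀ (t : ℝ) (v : E), θ (U t (θ v)) = U (-t) v)
    (Ep : Submodule ℂ E) (hEpcl : IsClosed (Ep : Set E))
    (hpos : ∀ ξ ∈ Ep, 0 ≤ (inner ℂ ξ (θ ξ) : ℂ))
    (hinvar : ∀ t : ℝ, 0 ≤ t → ∀ ξ ∈ Ep, U t ξ ∈ Ep)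
    (hcyc : Dense ((Submodule.span ℂ (⋃ t : ℝ, ⇑(U t) '' (Ep : Set E)) : Submodule ℂ E) :
      Set E)) :
    ∀ v : E, (∀ t : ℝ, U t v = v) → v ∈ Ep ∧ θ v = v := by
  -- the averaging operators
  set A : ℝ → E → E := fun N x => ((N : ℂ))⁻¹ • ∫ s in (0:ℝ)..N, U s x with hA
  have hInt : ∀ (x : E) (a b : ℝ), IntervalIntegrable (fun s => U s x) volume a b :=
    fun x a b => (hcont x).intervalIntegrable a b
  -- A is additive in x
  have hAsub : ∀ (N : ℝ) (x y : E), A N (x - y) = A N x - A N y := by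
    intro N x y
    have h : (∫ s in (0:ℝ)..N, U s (x - y))
        = (∫ s in (0:ℝ)..N, U s x) - ∫ s in (0:ℝ)..N, U s y := by
      rw [← intervalIntegral.integral_sub (hInt x 0 N) (hInt y 0 N)]
      simp [map_sub]
    show ((N : ℂ))⁻¹ • _ = ((N : ℂ))⁻¹ • _ - ((N : ℂ))⁻¹ • _
    rw [h, smul_sub]
  -- norm bound
  have hAnorm : ∀ (N : ℝ), 0 < N → ∀ x : E, ‖A N x‖ ≤ ‖x‖ := by
    intro N hN x
    have hb : ‖∫ s in (0:ℝ)..N, U s x‖ ≤ ‖x‖ * |N - 0| := by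
      apply intervalIntegral.norm_integral_le_of_norm_le_const
      intro s _
      simp
    have : ‖A N x‖ = ‖(N : ℂ)‖⁻¹ * ‖∫ s in (0:ℝ)..N, U s x‖ := by
      simp [hA, norm_smul]
    rw [this]
    have hNnorm : ‖(N : ℂ)‖ = N := by
      simp [Complex.norm_real, abs_of_pos hN]
    rw [hNnorm]
    calc N⁻¹ * ‖∫ s in (0:ℝ)..N, U s x‖ ≤ N⁻¹ * (‖x‖ * |N - 0|) := by
          apply mul_le_mul_of_nonneg_left hb (by positivity)
      _ = ‖x‖ := by
          rw [sub_zero, abs_of_pos hN]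
          field_simp
  -- A fixes fixed vectors
  have hAfix : ∀ (N : ℝ), 0 < N → ∀ v : E, (∀ t, U t v = v) → A N v = v := by
    intro N hN v hv
    have h1 : (∫ s in (0:ℝ)..N, U s v) = ∫ s in (0:ℝ)..N, v := by
      apply intervalIntegral.integral_congr
      intro s _
      exact hv s
    rw [hA]
    simp only [h1, intervalIntegral.integral_const, sub_zero]
    rw [← Complex.coe_smul, smul_smul]
    rw [inv_mul_cancel₀ (by exact_mod_cast hN.ne')]
    simp
  -- key claim: every fixed vector lies in Ep
  have hmemEp : ∀ v : E, (∀ t : ℝ, U t v = v) → v ∈ Ep := by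
    intro v hv
    -- on the cyclic span, the averages approach Ep
    have hspan : ∀ x ∈ Submodule.span ℂ (⋃ t : ℝ, ⇑(U t) '' (Ep : Set E)),
        ∃ g : ℝ → E, (∀ᶠ N in atTop, g N ∈ Ep) ∧
          Tendsto (fun N => A N x - g N) atTop (nhds 0) := by
      intro x hx
      induction hx using Submodule.span_induction with
      | mem x hxmem =>
          obtain ⟨_, ⟨t, rfl⟩, ξ, hξ, rfl⟩ := hxmem
          set a : ℝ := max t 0 with ha
          refine ⟨fun N => ((N : ℂ))⁻¹ • ∫ s in a..(N + t), U s ξ, ?_, ?_⟩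
          · filter_upwards [eventually_ge_atTop (a - t)] with N hN
            apply Submodule.smul_mem
            apply integral_mem_closed_submodule Ep hEpcl (hInt ξ a (N + t))
            intro s hs
            have hle : a ≤ N + t := by linarith
            rw [Set.uIcc_of_le hle] at hs
            have hs0 : 0 ≤ s := le_trans (le_max_right t 0) hs.1
            exact hinvar s hs0 ξ hξ
          · have heq : (fun N : ℝ => A N (U t ξ) - ((N : ℂ))⁻¹ • ∫ s in a..(N + t), U s ξ)
                = fun N : ℝ => ((N : ℂ))⁻¹ • ∫ s in t..a, U s ξ := by
              funext N
              have h1 : (∫ s in (0:ℝ)..N, U s (U t ξ)) = ∫ s in t..(N + t), U s ξ := by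
                have : (∫ s in (0:ℝ)..N, U s (U t ξ)) = ∫ s in (0:ℝ)..N, U (s + t) ξ := by
                  apply intervalIntegral.integral_congr
                  intro s _
                  exact (hgrp s t ξ).symm
                rw [this, intervalIntegral.integral_comp_add_right (fun s => U s ξ) t]
                norm_num
              have h2 : (∫ s in t..a, U s ξ) + (∫ s in a..(N + t), U s ξ)
                  = ∫ s in t..(N + t), U s ξ :=
                intervalIntegral.integral_add_adjacent_intervals (hInt ξ t a) (hInt ξ a (N + t))
              rw [hA]
              simp only
              rw [h1, ← h2]
              rw [smul_add]
              abel
            rw [heq]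
            have htend : Tendsto (fun N : ℝ => ((N : ℂ))⁻¹) atTop (nhds 0) := by
              have : Tendsto (fun N : ℝ => ((N⁻¹ : ℝ) : ℂ)) atTop (nhds ((0 : ℝ) : ℂ)) :=
                (Complex.continuous_ofReal.tendsto 0).comp tendsto_inv_atTop_zero
              simpa [Complex.ofReal_inv] using this
            simpa using htend.smul_const (∫ s in t..a, U s ξ)
      | zero =>
          refine ⟨fun _ => 0, Eventually.of_forall fun _ => Ep.zero_mem, ?_⟩
          have : (fun N : ℝ => A N 0 - 0) = fun _ => (0 : E) := by
            funext N
            simp [hA]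
          rw [this]
          exact tendsto_const_nhds
      | add x y hxs hys hx hy =>
          obtain ⟨g₁, hg₁, ht₁⟩ := hx
          obtain ⟨g₂, hg₂, ht₂⟩ := hy
          refine ⟨fun N => g₁ N + g₂ N, ?_, ?_⟩
          · filter_upwards [hg₁, hg₂] with N h1 h2 using Ep.add_mem h1 h2
          · have heq : (fun N => A N (x + y) - (g₁ N + g₂ N))
                = fun N => (A N x - g₁ N) + (A N y - g₂ N) := by
              funext N
              have hadd : A N (x + y) = A N x + A N y := by
                have h : (∫ s in (0:ℝ)..N, U s (x + y))
                    = (∫ s in (0:ℝ)..N, U s x) + ∫ s in (0:ℝ)..N, U s y := by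
                  rw [← intervalIntegral.integral_add (hInt x 0 N) (hInt y 0 N)]
                  simp [map_add]
                show ((N : ℂ))⁻¹ • _ = ((N : ℂ))⁻¹ • _ + ((N : ℂ))⁻¹ • _
                rw [h, smul_add]
              rw [hadd]; abel
            rw [heq]
            simpa using ht₁.add ht₂
      | smul c x hxs hx =>
          obtain ⟨g, hg, ht⟩ := hx
          refine ⟨fun N => c • g N, ?_, ?_⟩
          · filter_upwards [hg] with N h using Ep.smul_mem c h
          · have heq : (fun N => A N (c • x) - c • g N)
                = fun N => c • (A N x - g N) := by
              funext N
              have hsmul : A N (c • x) = c • A N x := by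
                have h : (∫ s in (0:ℝ)..N, U s (c • x))
                    = c • ∫ s in (0:ℝ)..N, U s x := by
                  rw [← intervalIntegral.integral_smul]
                  apply intervalIntegral.integral_congr
                  intro s _
                  simp [_root_.map_smul]
                show ((N : ℂ))⁻¹ • _ = c • (((N : ℂ))⁻¹ • _)
                rw [h, smul_comm]
              rw [hsmul, smul_sub]
            rw [heq]
            simpa using ht.const_smul c
    -- now approximate v
    have hvcl : v ∈ closure (Ep : Set E) := by
      rw [Metric.mem_closure_iff]
      intro ε hε
      obtain ⟨x, hxmem, hxdist⟩ := hcyc.exists_dist_lt v (half_pos hε)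
      obtain ⟨g, hg, ht⟩ := hspan x hxmem
      have h1 : ∀ᶠ N in atTop, dist (A N x - g N) 0 < ε / 2 :=
        (Metric.tendsto_nhds.mp ht) (ε / 2) (half_pos hε)
      obtain ⟨N, hN1, hgN, hAN⟩ := ((eventually_ge_atTop (1:ℝ)).and (hg.and h1)).exists
      have hN0 : (0:ℝ) < N := lt_of_lt_of_le one_pos hN1
      refine ⟨g N, hgN, ?_⟩
      have hveq : v - g N = A N (v - x) + (A N x - g N) := by
        rw [hAsub, hAfix N hN0 v hv]
        abel
      calc dist v (g N) = ‖v - g N‖ := dist_eq_norm v (g N)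
        _ = ‖A N (v - x) + (A N x - g N)‖ := by rw [hveq]
        _ ≤ ‖A N (v - x)‖ + ‖A N x - g N‖ := norm_add_le _ _
        _ ≤ ‖v - x‖ + ‖A N x - g N‖ := by
            exact add_le_add_left (hAnorm N hN0 (v - x)) _
        _ < ε / 2 + ε / 2 := by
            apply add_lt_add
            · rw [← dist_eq_norm]; exact hxdist
            · simpa [dist_eq_norm] using hAN
        _ = ε := add_halves ε
    rwa [hEpcl.closure_eq] at hvcl
  -- now the main statement
  intro v hv
  have hvEp : v ∈ Ep := hmemEp v hv
  -- θ v is also fixed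
  have hθvfix : ∀ t : ℝ, U t (θ v) = θ v := by
    intro t
    have h := hcomm t v
    rw [hv (-t)] at h
    have := congrArg θ h
    rwa [hθ] at this
  have hθvEp : θ v ∈ Ep := hmemEp (θ v) hθvfix
  -- reflection positivity forces θ v = v
  set u : E := v - θ v with hu
  have huEp : u ∈ Ep := Ep.sub_mem hvEp hθvEp
  have hθu : θ u = -u := by
    rw [hu, map_sub, hθ]
    abel
  have hposu := hpos u huEp
  rw [hθu, inner_neg_right] at hposu
  have hinner : Complex.re (inner ℂ u u : ℂ) ≤ 0 := by
    have h := (Complex.le_def.mp hposu).1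
    simpa using h
  have hnsq : ‖u‖ ^ 2 ≤ 0 := by
    rw [← _root_.inner_self_eq_norm_sq (𝕜 := ℂ) u]
    exact hinner
  have hzero : u = 0 := by
    have : ‖u‖ = 0 := by nlinarith [norm_nonneg u]
    exact norm_eq_zero.mp this
  rw [hu] at hzero
  exact ⟨hvEp, (sub_eq_zero.mp hzero).symm⟩
end

section
/- Let V ⊆ H be a standard subspace of a complex Hilbert space H, i.e., a closed real subspace with V ∩ iV = {0} and V + iV dense. Then there exists a unique bounded real-linear skew-symmetric operator C on V (with respect to the real inner product ⟨v,w⟩_V := Re⟨v,w⟩_H) such that Im⟨ξ, η⟩_H = ⟨ξ, Cη⟩_V for all ξ, η ∈ V, and C is a strict contraction: ‖Cv‖ < ‖v‖ for all v ≠ 0. -/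
/-- For a standard subspace `V` of a complex Hilbert space `H` there is a unique
bounded real-linear operator `C` on `V` with `Im⟨ξ,η⟩_H = ⟨ξ, Cη⟩_V` for all
`ξ, η ∈ V` (where `⟨v,w⟩_V = Re⟨v,w⟩_H` is the real inner product); moreover `C`
is skew-symmetric and a strict contraction. -/
theorem stmt12 {H : Type*} [NormedAddCommGroup H] [InnerProductSpace ℂ H] [CompleteSpace H]
    (V : Submodule ℝ H) (hVcl : IsClosed (V : Set H))
    (hV1 : ∀ v, v ∈ V → (∃ w ∈ V, v = Complex.I • w) → v = 0)
    (hVdense : Dense ((Submodule.span ℂ (V : Set H) : Submodule ℂ H) : Set H)) :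
    ∃ C : V →L[ℝ] V,
      (∀ ξ η : V, (inner ℂ (ξ : H) (η : H) : ℂ).im = (inner ℂ (ξ : H) ((C η : V) : H) : ℂ).re) ∧
      (∀ ξ η : V, (inner ℂ ((C ξ : V) : H) (η : H) : ℂ).re =
        -(inner ℂ (ξ : H) ((C η : V) : H) : ℂ).re) ∧
      (∀ v : V, v ≠ 0 → ‖C v‖ < ‖v‖) ∧
      (∀ C' : V →L[ℝ] V,
        (∀ ξ η : V, (inner ℂ (ξ : H) (η : H) : ℂ).im = (inner ℂ (ξ : H) ((C' η : V) : H) : ℂ).re) →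
        C' = C) := by
  letI : InnerProductSpace ℝ H := InnerProductSpace.complexToReal
  haveI : CompleteSpace V := hVcl.completeSpace_coe
  have hre : ∀ x y : V, (inner ℝ x y : ℝ) = (inner ℂ (x : H) (y : H) : ℂ).re := fun x y => rfl
  have hsm : ∀ (c : ℝ) (x : H), c • x = (c : ℂ) • x := fun c x =>
    (RCLike.real_smul_eq_coe_smul (K := ℂ) c x)
  set f : V → (V →L[ℝ] ℝ) := fun η =>
    LinearMap.mkContinuous
      { toFun := fun ξ => (inner ℂ (ξ : H) (η : H) : ℂ).im
        map_add' := fun x y => by simp [inner_add_left]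
        map_smul' := fun c x => by
          simp only [Submodule.coe_smul, hsm, inner_smul_left, RingHom.id_apply,
            Complex.conj_ofReal, Complex.mul_im, Complex.ofReal_re, Complex.ofReal_im,
            smul_eq_mul]
          ring } ‖η‖
      (fun ξ => by
        simp only [LinearMap.coe_mk, AddHom.coe_mk]
        calc |(inner ℂ (ξ : H) (η : H) : ℂ).im| ≤ ‖(inner ℂ (ξ : H) (η : H) : ℂ)‖ :=
              Complex.abs_im_le_norm _
          _ ≤ ‖(ξ : H)‖ * ‖(η : H)‖ := norm_inner_le_norm _ _
          _ = ‖η‖ * ‖ξ‖ := mul_comm _ _) with hf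
  set C0 : V → V := fun η => (InnerProductSpace.toDual ℝ V).symm (f η) with hC0
  have hCdef : ∀ ξ η : V, (inner ℝ (C0 η) ξ : ℝ) = (inner ℂ (ξ : H) (η : H) : ℂ).im := by
    intro ξ η
    rw [hC0]
    exact InnerProductSpace.toDual_symm_apply
  have hCdef' : ∀ ξ η : V, (inner ℝ ξ (C0 η) : ℝ) = (inner ℂ (ξ : H) (η : H) : ℂ).im := by
    intro ξ η; rw [real_inner_comm]; exact hCdef ξ η
  have hadd : ∀ x y : V, C0 (x + y) = C0 x + C0 y := by
    intro x y
    apply ext_inner_left ℝ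
    intro ξ
    rw [inner_add_right, hCdef', hCdef', hCdef']
    push_cast
    rw [inner_add_right]
    simp
  have hsmul : ∀ (c : ℝ) (x : V), C0 (c • x) = c • C0 x := by
    intro c x
    apply ext_inner_left ℝ
    intro ξ
    rw [inner_smul_right, hCdef', hCdef']
    push_cast
    rw [hsm, inner_smul_right]
    simp [Complex.mul_im]
  have hbound : ∀ η : V, ‖C0 η‖ ≤ ‖η‖ := by
    intro η
    have h1 : ‖C0 η‖ * ‖C0 η‖ ≤ ‖C0 η‖ * ‖η‖ := by
      calc ‖C0 η‖ * ‖C0 η‖ = (inner ℝ (C0 η) (C0 η) : ℝ) := (real_inner_self_eq_norm_mul_norm _).symm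
        _ = (inner ℂ ((C0 η : V) : H) (η : H) : ℂ).im := hCdef (C0 η) η
        _ ≤ ‖(inner ℂ ((C0 η : V) : H) (η : H) : ℂ)‖ :=
            le_trans (le_abs_self _) (Complex.abs_im_le_norm _)
        _ ≤ ‖((C0 η : V) : H)‖ * ‖(η : H)‖ := norm_inner_le_norm _ _
        _ = ‖C0 η‖ * ‖η‖ := rfl
    rcases eq_or_lt_of_le (norm_nonneg (C0 η)) with h | h
    · rw [← h]; exact norm_nonneg η
    · exact le_of_mul_le_mul_left h1 h
  set C : V →L[ℝ] V :=
    LinearMap.mkContinuous { toFun := C0, map_add' := hadd, map_smul' := hsmul } 1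
      (fun η => by simpa using hbound η) with hC
  have hCapp : ∀ η : V, C η = C0 η := fun η => rfl
  refine ⟨C, ?_, ?_, ?_, ?_⟩
  · intro ξ η
    rw [← hre ξ (C η), hCapp, hCdef']
  · intro ξ η
    rw [← hre (C ξ) η, ← hre ξ (C η), hCapp, hCapp, hCdef η ξ, hCdef' ξ η,
      ← inner_conj_symm (ξ : H) (η : H), Complex.conj_im]
    ring
  · intro v hv
    by_cases hCv : C v = 0
    · rw [hCv, norm_zero]; exact norm_pos_iff.mpr hv
    · have h2 : ‖C v‖ * ‖C v‖ = (inner ℂ ((C v : V) : H) (v : H) : ℂ).im := by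
        rw [← real_inner_self_eq_norm_mul_norm]
        exact hCdef (C v) v
      have hCS : ‖(inner ℂ ((C v : V) : H) (v : H) : ℂ)‖ < ‖((C v : V) : H)‖ * ‖(v : H)‖ := by
        rcases lt_or_eq_of_le (norm_inner_le_norm (𝕜 := ℂ) ((C v : V) : H) (v : H)) with h | h
        · exact h
        · exfalso
          have hCv' : ((C v : V) : H) ≠ 0 := by
            simpa [Submodule.coe_eq_zero] using hCv
          have hv' : (v : H) ≠ 0 := by simpa [Submodule.coe_eq_zero] using hv
          obtain ⟨r, hr0, hrv⟩ := (norm_inner_eq_norm_iff (𝕜 := ℂ) hCv' hv').mp h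
          set nc : ℝ := ‖((C v : V) : H)‖ with hnc
          have hnc0 : nc ≠ 0 := norm_ne_zero_iff.mpr hCv'
          have hinner : (inner ℂ ((C v : V) : H) (v : H) : ℂ) = r * (nc : ℂ) ^ 2 := by
            rw [hrv, inner_smul_right, inner_self_eq_norm_sq_to_K, ← hnc]
            norm_cast
          -- real part: inner (C0 v) v is real part, equals Im⟨v,v⟩ = 0
          have hRe : (inner ℂ ((C v : V) : H) (v : H) : ℂ).re = 0 := by
            rw [← hre (C v) v, hCapp, hCdef v v]
            exact inner_self_im (𝕜 := ℂ) _
          have hre_r : r.re = 0 := by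
            have := hRe
            rw [hinner] at this
            simp only [Complex.mul_re, Complex.mul_im, Complex.ofReal_re, Complex.ofReal_im,
              pow_two, Complex.mul_re, Complex.ofReal_re, Complex.ofReal_im] at this
            have h' : r.re * (nc * nc) = 0 := by linarith
            rcases mul_eq_zero.mp h' with h'' | h''
            · exact h''
            · exact absurd (mul_self_eq_zero.mp h'') hnc0
          have him_r : r.im = 1 := by
            have h3 : (inner ℂ ((C v : V) : H) (v : H) : ℂ).im = nc * nc := by
              rw [← h2]; rfl
            rw [hinner] at h3
            simp only [Complex.mul_im, Complex.mul_re, Complex.ofReal_re, Complex.ofReal_im,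
              pow_two] at h3
            have h4 : r.im * (nc * nc) = nc * nc := by linarith
            have h5 : nc * nc ≠ 0 := mul_self_ne_zero.mpr hnc0
            have h6 : r.im * (nc * nc) = 1 * (nc * nc) := by linarith
            exact mul_right_cancel₀ h5 h6
          have hrI : r = Complex.I := by
            rw [Complex.ext_iff]
            exact ⟨by simp [hre_r], by simp [him_r]⟩
          have : (v : H) = 0 := hV1 (v : H) v.2 ⟨((C v : V) : H), (C v).2, by rw [hrv, hrI]⟩
          exact hv' this
      have h6 : ‖C v‖ * ‖C v‖ < ‖C v‖ * ‖v‖ := by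
        calc ‖C v‖ * ‖C v‖ = (inner ℂ ((C v : V) : H) (v : H) : ℂ).im := h2
          _ ≤ ‖(inner ℂ ((C v : V) : H) (v : H) : ℂ)‖ :=
              le_trans (le_abs_self _) (Complex.abs_im_le_norm _)
          _ < ‖((C v : V) : H)‖ * ‖(v : H)‖ := hCS
          _ = ‖C v‖ * ‖v‖ := rfl
      have h7 : 0 < ‖C v‖ := norm_pos_iff.mpr hCv
      exact lt_of_mul_lt_mul_left h6 (le_of_lt h7)
  · intro C' hC'
    refine ContinuousLinearMap.ext fun η => ?_
    apply ext_inner_left ℝ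
    intro ξ
    rw [hre ξ (C' η), hre ξ (C η), ← hC' ξ η]
    rw [← hre ξ (C η)]
    exact (hCdef' ξ η).symm
end

section
/- Let (Q, Σ, μ) be a probability space, θ a measure-preserving involution of (Q, Σ, μ), and Σ₊ ⊆ Σ a sub-σ-algebra with conditional expectations E₊ (onto L²(Q, Σ₊, μ)) and E₋ (onto L²(Q, θΣ₊, μ)) and E₀ (onto L²(Q, Σ₀, μ)) for a sub-σ-algebra Σ₀ ⊆ Σ₊ ∩ θΣ₊ fixed by θ. If the Markov property E₊E₋ = E₊E₀E₋ holds and θE₀ = E₀θ = E₀ (θ viewed as unitary on L²), then for every f ∈ L²(Q, Σ₊, μ) one has ⟨f, θf⟩ = ‖E₀f‖² ≥ 0; i.e., reflection positivity holds on L²(Q, Σ₊, μ). -/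
open MeasureTheory
open scoped ComplexOrder

section Aux

variable {Q : Type*} {m' m : MeasurableSpace Q} {μ : Measure Q}

/-- Conditional expectation commutes with a real-continuous-linear map. -/
lemma condexp_clm_comm' {F : Type*} [NormedAddCommGroup F] [NormedSpace ℝ F] [CompleteSpace F]
    [IsFiniteMeasure μ] (hm : m' ≤ m) (T : ℂ →L[ℝ] F) {f : Q → ℂ}
    (hf : Integrable f μ) :
    (fun x => T ((μ[f|m']) x)) =ᵐ[μ] μ[fun x => T (f x)|m'] := by
  haveI : SigmaFinite (μ.trim hm) := by
    have : IsFiniteMeasure (μ.trim hm) := isFiniteMeasure_trim hm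
    infer_instance
  refine ae_eq_condExp_of_forall_setIntegral_eq hm (T.integrable_comp hf) ?_ ?_ ?_
  · intro s _ _
    exact (T.integrable_comp (integrable_condExp)).integrableOn
  · intro s hs hμs
    rw [T.integral_comp_comm (integrable_condExp).integrableOn,
      T.integral_comp_comm hf.integrableOn, setIntegral_condExp hm hf hs]
  · exact (T.continuous.comp_stronglyMeasurable stronglyMeasurable_condExp).aestronglyMeasurable

/-- Conditional expectation of an L² function is L². -/
lemma memℒp_two_condexp' [IsFiniteMeasure μ] (hm : m' ≤ m) {f : Q → ℂ}
    (hf : MemLp f 2 μ) : MemLp (μ[f|m']) 2 μ := by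
  haveI : SigmaFinite (μ.trim hm) := by
    have : IsFiniteMeasure (μ.trim hm) := isFiniteMeasure_trim hm
    infer_instance
  have hfi : Integrable f μ := hf.integrable one_le_two
  have h : (fun x => (condExpL2 ℂ ℂ hm (hf.toLp f) : Q →₂[μ] ℂ) x) =ᵐ[μ] μ[f|m'] := by
    refine ae_eq_condExp_of_forall_setIntegral_eq hm hfi ?_ ?_ ?_
    · intro s _ hμs
      exact integrableOn_condExpL2_of_measure_ne_top hm hμs.ne _
    · intro s hs hμs
      rw [integral_condExpL2_eq hm (hf.toLp f) hs hμs.ne]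
      exact setIntegral_congr_ae (hm s hs) ((hf.coeFn_toLp).mono fun x hx _ => hx)
    · exact lpMeas.aestronglyMeasurable _
  exact (Lp.memLp _).ae_eq h

/-- pull-out integral identity, real version. -/
lemma realkey [IsProbabilityMeasure μ] (hm : m' ≤ m) {φ ψ : Q → ℝ}
    (hφ : StronglyMeasurable[m'] φ) (hψ : Integrable ψ μ)
    (hφψ : Integrable (φ * ψ) μ) :
    ∫ x, φ x * ψ x ∂μ = ∫ x, φ x * (μ[ψ|m']) x ∂μ := by
  have h := condExp_mul_of_stronglyMeasurable_left hφ hφψ hψ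
  calc ∫ x, φ x * ψ x ∂μ = ∫ x, (φ * ψ) x ∂μ := rfl
    _ = ∫ x, (μ[φ * ψ|m']) x ∂μ := (integral_condExp hm (f := φ * ψ)).symm
    _ = ∫ x, φ x * (μ[ψ|m']) x ∂μ := integral_congr_ae (h.mono fun x hx => hx)

lemma mulIntR [IsProbabilityMeasure μ] {φ ψ : Q → ℝ} (hφ : MemLp φ 2 μ) (hψ : MemLp ψ 2 μ) :
    Integrable (fun x => φ x * ψ x) μ := by
  have h : MemLp (φ • ψ) 1 μ := hψ.smul hφ (hpqr := ⟨by simp [one_div, ENNReal.inv_two_add_inv_two]⟩)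
  simpa [smul_eq_mul, Pi.mul_def] using h.integrable le_rfl

lemma mulIntC [IsProbabilityMeasure μ] {φ ψ : Q → ℂ} (hφ : MemLp φ 2 μ) (hψ : MemLp ψ 2 μ) :
    Integrable (fun x => φ x * ψ x) μ := by
  have h : MemLp (φ • ψ) 1 μ := hψ.smul hφ (hpqr := ⟨by simp [one_div, ENNReal.inv_two_add_inv_two]⟩)
  simpa [smul_eq_mul, Pi.mul_def] using h.integrable le_rfl

/-- pull-out integral identity, complex version. -/
lemma key' [IsProbabilityMeasure μ] (hm : m' ≤ m) {h g : Q → ℂ}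
    (hh : MemLp h 2 μ) (hg : MemLp g 2 μ) (hhm : StronglyMeasurable[m'] h) :
    ∫ x, h x * g x ∂μ = ∫ x, h x * (μ[g|m']) x ∂μ := by
  have hG : MemLp (μ[g|m']) 2 μ := memℒp_two_condexp' hm hg
  have hgi : Integrable g μ := hg.integrable one_le_two
  have hhr : MemLp (fun x => (h x).re) 2 μ := by simpa using hh.re
  have hhi : MemLp (fun x => (h x).im) 2 μ := by simpa using hh.im
  have hgr : MemLp (fun x => (g x).re) 2 μ := by simpa using hg.re
  have hgi2 : MemLp (fun x => (g x).im) 2 μ := by simpa using hg.im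
  have hGr : MemLp (fun x => ((μ[g|m']) x).re) 2 μ := by simpa using hG.re
  have hGi : MemLp (fun x => ((μ[g|m']) x).im) 2 μ := by simpa using hG.im
  have hhrm : StronglyMeasurable[m'] (fun x => (h x).re) :=
    Complex.continuous_re.comp_stronglyMeasurable hhm
  have hhim : StronglyMeasurable[m'] (fun x => (h x).im) :=
    Complex.continuous_im.comp_stronglyMeasurable hhm
  have hre : (fun x => ((μ[g|m']) x).re) =ᵐ[μ] μ[fun x => (g x).re|m'] := by
    simpa using condexp_clm_comm' hm Complex.reCLM hgi
  have him : (fun x => ((μ[g|m']) x).im) =ᵐ[μ] μ[fun x => (g x).im|m'] := by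
    simpa using condexp_clm_comm' hm Complex.imCLM hgi
  have int1 : Integrable (fun x => h x * g x) μ := mulIntC hh hg
  have int2 : Integrable (fun x => h x * (μ[g|m']) x) μ := mulIntC hh hG
  -- helper for each of the four real products
  have base : ∀ (φ : Q → ℝ), StronglyMeasurable[m'] φ → MemLp φ 2 μ →
      ∀ (ψ G' : Q → ℝ), MemLp ψ 2 μ → MemLp G' 2 μ →
      (G' =ᵐ[μ] μ[ψ|m']) → ∫ x, φ x * ψ x ∂μ = ∫ x, φ x * G' x ∂μ := by
    intro φ hφm hφ2 ψ G' hψ2 hG'2 hG'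
    rw [realkey hm hφm (hψ2.integrable one_le_two) (by simpa [Pi.mul_def] using mulIntR hφ2 hψ2)]
    exact (integral_congr_ae (hG'.mono fun x hx => by rw [hx])).symm
  have e1 : (∫ x, h x * g x ∂μ).re = ∫ x, (h x * g x).re ∂μ := by
    simpa using (integral_re int1).symm
  have e2 : (∫ x, h x * (μ[g|m']) x ∂μ).re = ∫ x, (h x * (μ[g|m']) x).re ∂μ := by
    simpa using (integral_re int2).symm
  have e3 : (∫ x, h x * g x ∂μ).im = ∫ x, (h x * g x).im ∂μ := by
    simpa using (integral_im int1).symm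
  have e4 : (∫ x, h x * (μ[g|m']) x ∂μ).im = ∫ x, (h x * (μ[g|m']) x).im ∂μ := by
    simpa using (integral_im int2).symm
  apply Complex.ext
  · rw [e1, e2]
    simp only [Complex.mul_re]
    rw [integral_sub (mulIntR hhr hgr) (mulIntR hhi hgi2),
      integral_sub (mulIntR hhr hGr) (mulIntR hhi hGi),
      base _ hhrm hhr _ _ hgr hGr hre, base _ hhim hhi _ _ hgi2 hGi him]
  · rw [e3, e4]
    simp only [Complex.mul_im]
    rw [integral_add (mulIntR hhr hgi2) (mulIntR hhi hgr),
      integral_add (mulIntR hhr hGi) (mulIntR hhi hGr),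
      base _ hhrm hhr _ _ hgi2 hGi him, base _ hhim hhi _ _ hgr hGr hre]

end Aux

/-- Markov property implies reflection positivity: for a probability space
`(Q, Σ, μ)`, a measure-preserving involution `θ`, sub-σ-algebras
`Σ₀ ⊆ Σ₊ ∩ θΣ₊` (with `θΣ₊` realized as `Σ₊.comap θ`), conditional expectations
`E₊, E₋, E₀` satisfying `θE₀ = E₀θ = E₀` and the Markov property
`E₊E₋ = E₊E₀E₋`, every `f ∈ L²(Q, Σ₊, μ)` satisfies
`⟨f, θf⟩ = ‖E₀f‖² ≥ 0`. -/


theorem stmt19 {Q : Type*} [m : MeasurableSpace Q] (μ : Measure Q) [IsProbabilityMeasure μ]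
    (θ : Q → Q) (hθmeas : Measurable θ) (hθpres : MeasurePreserving θ μ μ)
    (hθinv : ∀ q, θ (θ q) = q)
    (mp m0 : MeasurableSpace Q) (hmp : mp ≤ m) (hm0p : m0 ≤ mp)
    (hm0m : m0 ≤ MeasurableSpace.comap θ mp)
    (hθ0 : ∀ f : Q → ℂ, MemLp f 2 μ →
      (μ[f ∘ θ|m0] =ᵐ[μ] μ[f|m0]) ∧ ((μ[f|m0]) ∘ θ =ᵐ[μ] μ[f|m0]))
    (hMarkov : ∀ f : Q → ℂ, MemLp f 2 μ →
      μ[(μ[f|MeasurableSpace.comap θ mp])|mp]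
        =ᵐ[μ] μ[(μ[(μ[f|MeasurableSpace.comap θ mp])|m0])|mp]) :
    ∀ f : Q → ℂ, MemLp f 2 μ → Measurable[mp] f →
      (∫ q, (starRingEnd ℂ) (f q) * f (θ q) ∂μ)
          = ((∫ q, ‖(μ[f|m0]) q‖ ^ 2 ∂μ : ℝ) : ℂ) ∧
        0 ≤ ∫ q, (starRingEnd ℂ) (f q) * f (θ q) ∂μ := by
  intro f hf hfmp
  have hm0 : m0 ≤ m := hm0p.trans hmp
  have hmθ : MeasurableSpace.comap θ mp ≤ m :=
    (MeasurableSpace.comap_mono hmp).trans hθmeas.comap_le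
  have hfθ2 : MemLp (f ∘ θ) 2 μ := hf.comp_measurePreserving hθpres
  have hfθi : Integrable (f ∘ θ) μ := hfθ2.integrable one_le_two
  have hfθm : StronglyMeasurable[MeasurableSpace.comap θ mp] (f ∘ θ) :=
    (hfmp.comp (Measurable.of_comap_le le_rfl)).stronglyMeasurable
  have hcond : μ[f ∘ θ|MeasurableSpace.comap θ mp] = f ∘ θ :=
    condExp_of_stronglyMeasurable hmθ hfθm hfθi
  have hM := hMarkov (f ∘ θ) hfθ2
  rw [hcond] at hM
  have htower : μ[(μ[f ∘ θ|m0])|mp] = μ[f ∘ θ|m0] :=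
    condExp_of_stronglyMeasurable hmp (stronglyMeasurable_condExp.mono hm0p) integrable_condExp
  rw [htower] at hM
  have hE : μ[f ∘ θ|mp] =ᵐ[μ] μ[f|m0] := hM.trans (hθ0 f hf).1
  have hconjm : StronglyMeasurable[mp] (fun x => (starRingEnd ℂ) (f x)) :=
    continuous_star.comp_stronglyMeasurable hfmp.stronglyMeasurable
  have hconj2 : MemLp (fun x => (starRingEnd ℂ) (f x)) 2 μ := by
    refine hf.of_le ((hconjm.mono hmp).aestronglyMeasurable) ?_
    exact Filter.Eventually.of_forall fun x => by rw [starRingEnd_apply]; exact (norm_star _).le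
  have hG2 : MemLp (μ[f|m0]) 2 μ := memℒp_two_condexp' hm0 hf
  have hconjcomm : (fun x => (starRingEnd ℂ) ((μ[f|m0]) x))
      =ᵐ[μ] μ[fun x => (starRingEnd ℂ) (f x)|m0] := by
    have h := condexp_clm_comm' hm0 (Complex.conjCLE.toContinuousLinearMap)
      (hf.integrable one_le_two)
    simp only [ContinuousLinearEquiv.coe_coe, Complex.conjCLE_apply] at h
    exact h
  have heq : (∫ q, (starRingEnd ℂ) (f q) * f (θ q) ∂μ)
      = ((∫ q, ‖(μ[f|m0]) q‖ ^ 2 ∂μ : ℝ) : ℂ) := by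
    calc ∫ q, (starRingEnd ℂ) (f q) * f (θ q) ∂μ
        = ∫ q, (starRingEnd ℂ) (f q) * (f ∘ θ) q ∂μ := rfl
      _ = ∫ q, (starRingEnd ℂ) (f q) * (μ[f ∘ θ|mp]) q ∂μ := key' hmp hconj2 hfθ2 hconjm
      _ = ∫ q, (starRingEnd ℂ) (f q) * (μ[f|m0]) q ∂μ :=
          integral_congr_ae (Filter.EventuallyEq.mul Filter.EventuallyEq.rfl hE)
      _ = ∫ q, (μ[f|m0]) q * (starRingEnd ℂ) (f q) ∂μ := by simp_rw [mul_comm]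
      _ = ∫ q, (μ[f|m0]) q * (μ[fun x => (starRingEnd ℂ) (f x)|m0]) q ∂μ :=
          key' hm0 hG2 hconj2 stronglyMeasurable_condExp
      _ = ∫ q, (μ[f|m0]) q * (starRingEnd ℂ) ((μ[f|m0]) q) ∂μ :=
          integral_congr_ae (Filter.EventuallyEq.mul Filter.EventuallyEq.rfl hconjcomm.symm)
      _ = ∫ q, ((‖(μ[f|m0]) q‖ ^ 2 : ℝ) : ℂ) ∂μ :=
          integral_congr_ae (Filter.Eventually.of_forall fun x => by
            simp [Complex.mul_conj, Complex.normSq_eq_norm_sq])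
      _ = ((∫ q, ‖(μ[f|m0]) q‖ ^ 2 ∂μ : ℝ) : ℂ) :=
          @integral_ofReal Q m μ ℂ _ (fun q => ‖(μ[f|m0]) q‖ ^ 2)
  refine ⟨heq, heq ▸ ?_⟩
  exact Complex.zero_le_real.2 (integral_nonneg fun x => sq_nonneg _)
end
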